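/- Let p be a prime and A a finite abelian p-group (every element has p-power order). Let φ₁, φ₂ be two dualities of A. Then 𝔏_{φ₂}(H) = 𝔏_{φ₁}(H) and ℜ_{φ₂}(H) = ℜ_{φ₁}(H) hold for every subgroup H ⊆ A if and only if there exists an integer m coprime to p such that φ₂(a) = φ₁(m • a) for all a ∈ A. -/

import Mathlib

/-- A duality of a finite abelian group `A`: a group isomorphism from `A` to its
character group `Â = AddChar A ℂˣ`, encoded as a bijective map respecting the operations. -/
def IsDuality {A : Type*} [AddCommGroup A] (φ : A → AddChar A ℂˣ) : Prop :=
  Function.Bijective φ ∧ ∀ a b : A, φ (a + b) = φ a * φ b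

/-- The left dual of a set `S ⊆ A`: all `x` with `Φ(x,h) = φ(x)(h) = 1` for all `h ∈ S`. -/
def lDual {A : Type*} [AddCommGroup A] (φ : A → AddChar A ℂˣ) (S : Set A) : Set A :=
  {x | ∀ h ∈ S, φ x h = 1}

/-- The right dual of a set `S ⊆ A`: all `x` with `Φ(h,x) = φ(h)(x) = 1` for all `h ∈ S`. -/
def rDual {A : Type*} [AddCommGroup A] (φ : A → AddChar A ℂˣ) (S : Set A) : Set A :=
  {x | ∀ h ∈ S, φ h x = 1}

/-!
Write `φ₂ = φ₁ ∘ ψ` with `ψ` an automorphism of `A`. Equality of the right duals of the cyclic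
subgroups `⟨a⟩` says that the characters `φ₁ a` and `φ₂ a` have the same kernel. Such a character
factors through a finite cyclic group of roots of unity, so `φ₂ a` is a power of `φ₁ a`, i.e.
`ψ a ∈ ⟨a⟩`. An endomorphism of a finite abelian `p`-group that preserves every cyclic subgroup is
multiplication by a single integer `m`: split `A` into cyclic summands and compare a summand of
maximal order with each other one through the value of `ψ` on their sum. Injectivity of `ψ` then
forces `p ∤ m`. Conversely, if `p ∤ m` then `Φ₂(x, y) = Φ₁(x, y) ^ m`, and `m` is invertible modulo
the `p`-power order of `Φ₁(x, y)`, so the two pairings vanish at the same pairs.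
-/

open AddSubgroup

theorem AddChar.exists_apply_eq_pow_of_forall_eq_one_imp {A R : Type*} [AddCommGroup A] [Finite A]
    [CommRing R] [IsDomain R] {χ₁ χ₂ : AddChar A Rˣ} (h : ∀ x, χ₁ x = 1 → χ₂ x = 1) :
    ∃ n : ℕ, ∀ x, χ₂ x = χ₁ x ^ n := by
  have : Finite χ₁.toMonoidHom.range :=
    Finite.of_surjective _ χ₁.toMonoidHom.rangeRestrict_surjective
  obtain ⟨g, hg⟩ := χ₁.toMonoidHom.range.isCyclic_iff_exists_zpowers_eq_top.1 inferInstance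
  obtain ⟨x₀, rfl⟩ : ∃ x₀, χ₁ x₀ = g := by
    obtain ⟨y, hy⟩ : g ∈ χ₁.toMonoidHom.range := hg ▸ Subgroup.mem_zpowers g
    exact ⟨y.toAdd, hy⟩
  have : NeZero (orderOf (χ₁ x₀)) := ⟨(χ₁.toMonoidHom.isOfFinOrder
    (isOfFinOrder_of_finite (Multiplicative.ofAdd x₀))).orderOf_pos.ne'⟩
  have hχ₂x₀ : χ₂ x₀ ∈ rootsOfUnity (orderOf (χ₁ x₀)) R := by
    rw [mem_rootsOfUnity, ← map_nsmul_eq_pow]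
    exact h _ (by rw [map_nsmul_eq_pow]; exact pow_orderOf_eq_one _)
  obtain ⟨n, -, hn⟩ := (IsPrimitiveRoot.orderOf (χ₁ x₀)).eq_pow_of_mem_rootsOfUnity hχ₂x₀
  refine ⟨n, fun x => ?_⟩
  obtain ⟨k, hk⟩ : χ₁ x ∈ Subgroup.zpowers (χ₁ x₀) := hg ▸ ⟨Multiplicative.ofAdd x, rfl⟩
  have hx : χ₂ (x - k • x₀) = 1 :=
    h _ (by rw [map_sub_eq_div, map_zsmul_eq_zpow, div_eq_one]; exact hk.symm)
  rw [map_sub_eq_div, map_zsmul_eq_zpow, div_eq_one] at hx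
  rw [hx, ← hk, ← hn, ← zpow_natCast, ← zpow_natCast, ← zpow_mul, ← zpow_mul, mul_comm]

theorem eq_one_of_zpow_eq_one_of_isCoprime {G : Type*} [Group G] {z : G} {m n : ℤ}
    (hmn : IsCoprime m n) (hm : z ^ m = 1) (hn : z ^ n = 1) : z = 1 := by
  obtain ⟨u, v, huv⟩ := hmn
  rw [← zpow_one z, ← huv, zpow_add, mul_comm u, mul_comm v, zpow_mul, zpow_mul, hm, hn, one_zpow,
    one_zpow, one_mul]

section

variable {A : Type*} [AddCommGroup A]

theorem AddMonoidHom.apply_eq_zsmul_of_disjoint (f : A →+ A) (hf : ∀ x, f x ∈ zmultiples x)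
    {a b : A} (hab : Disjoint (zmultiples a) (zmultiples b)) (hba : addOrderOf b ∣ addOrderOf a)
    {m : ℤ} (ha : f a = m • a) : f b = m • b := by
  obtain ⟨n, hn⟩ := mem_zmultiples_iff.1 (hf b)
  obtain ⟨k, hk⟩ := mem_zmultiples_iff.1 (hf (a + b))
  have hsum : (k - m) • a = (n - k) • b := by
    rw [sub_smul, sub_smul, sub_eq_sub_iff_add_eq_add, ← smul_add, hk, hn, ← ha, map_add]
    abel
  have hzero : (k - m) • a = 0 := (disjoint_def.1 hab) (zsmul_mem (mem_zmultiples a) _)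
    (hsum ▸ zsmul_mem (mem_zmultiples b) _)
  have hkb : (k - m) • b = 0 := by
    rw [← addOrderOf_dvd_iff_zsmul_eq_zero] at hzero ⊢
    exact (Int.natCast_dvd_natCast.2 hba).trans hzero
  rw [← hn, ← sub_eq_zero, ← sub_smul, ← sub_add_sub_cancel n k m, add_smul, ← hsum, hzero, hkb,
    add_zero]

theorem AddMonoidHom.exists_eq_zsmul_of_generators {ι : Type*} [Finite ι] (f : A →+ A)
    (hf : ∀ x, f x ∈ zmultiples x) (g : ι → A) (hgen : closure (Set.range g) = ⊤)
    (hdisj : Pairwise fun i j => Disjoint (zmultiples (g i)) (zmultiples (g j)))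
    (hord : ∀ i j, addOrderOf (g i) ≤ addOrderOf (g j) → addOrderOf (g i) ∣ addOrderOf (g j)) :
    ∃ m : ℤ, ∀ a, f a = m • a := by
  obtain ⟨m, hm⟩ : ∃ m : ℤ, ∀ i, f (g i) = m • g i := by
    rcases isEmpty_or_nonempty ι with _ | _
    · exact ⟨0, isEmptyElim⟩
    obtain ⟨i₀, hi₀⟩ := Finite.exists_max fun i => addOrderOf (g i)
    obtain ⟨m, hm⟩ := mem_zmultiples_iff.1 (hf (g i₀))
    refine ⟨m, fun i => ?_⟩
    rcases eq_or_ne i₀ i with rfl | hi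
    · exact hm.symm
    · exact f.apply_eq_zsmul_of_disjoint hf (hdisj hi) (hord _ _ (hi₀ i)) hm.symm
  have hfm : f = m • AddMonoidHom.id A := eq_of_eqOn_dense hgen (Set.forall_mem_range.2 hm)
  exact ⟨m, DFunLike.congr_fun hfm⟩

theorem AddCommGroup.exists_generators_pairwise_disjoint_zmultiples [Finite A] :
    ∃ (ι : Type) (_ : Finite ι) (g : ι → A), closure (Set.range g) = ⊤ ∧
      Pairwise fun i j => Disjoint (zmultiples (g i)) (zmultiples (g j)) := by
  classical
  obtain ⟨ι, _, n, -, ⟨e⟩⟩ := AddCommGroup.equiv_directSum_zmod_of_finite' A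
  have hof : ∀ i (z : ℤ), (z • e.symm (DirectSum.of _ i 1) : A) = e.symm (DirectSum.of _ i z) := by
    intro i z
    rw [← map_zsmul, ← map_zsmul, zsmul_one]
  refine ⟨ι, inferInstance, fun i => e.symm (DirectSum.of _ i 1), ?_, ?_⟩
  · refine eq_top_iff.2 fun a _ => ?_
    rw [← e.symm_apply_apply a]
    induction e a using DirectSum.induction_on with
    | zero => rw [map_zero]; exact zero_mem _
    | of i z =>
      rw [← ZMod.intCast_zmod_cast z, ← hof]
      exact zsmul_mem (subset_closure (Set.mem_range_self i)) _
    | add x y hx hy => rw [map_add]; exact add_mem hx hy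
  · intro i j hij
    rw [disjoint_def]
    intro x hi hj
    obtain ⟨k, rfl⟩ := mem_zmultiples_iff.1 hi
    obtain ⟨l, hl⟩ := mem_zmultiples_iff.1 hj
    rw [hof, hof, e.symm.injective.eq_iff] at hl
    have hk := DFunLike.congr_fun hl i
    rw [DirectSum.of_eq_of_ne _ _ _ hij, DirectSum.of_eq_same] at hk
    rw [hof, ← hk, map_zero, map_zero]

theorem addOrderOf_dvd_addOrderOf_of_le {p : ℕ} (hp : p.Prime)
    (hA : ∀ a : A, ∃ k : ℕ, p ^ k • a = 0) {a b : A} (h : addOrderOf a ≤ addOrderOf b) :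
    addOrderOf a ∣ addOrderOf b := by
  have hpow (c : A) : ∃ i, addOrderOf c = p ^ i := by
    obtain ⟨k, hk⟩ := hA c
    obtain ⟨i, -, hi⟩ := (Nat.dvd_prime_pow hp).1 (addOrderOf_dvd_of_nsmul_eq_zero hk)
    exact ⟨i, hi⟩
  obtain ⟨i, hi⟩ := hpow a
  obtain ⟨j, hj⟩ := hpow b
  rw [hi, hj] at h ⊢
  exact pow_dvd_pow p ((Nat.pow_le_pow_iff_right hp.one_lt).1 h)

theorem AddMonoidHom.exists_eq_zsmul_of_forall_mem_zmultiples [Finite A] {p : ℕ} (hp : p.Prime)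
    (hA : ∀ a : A, ∃ k : ℕ, p ^ k • a = 0) (f : A →+ A) (hf : ∀ x, f x ∈ zmultiples x) :
    ∃ m : ℤ, ∀ a, f a = m • a := by
  obtain ⟨ι, _, g, hgen, hdisj⟩ :=
    AddCommGroup.exists_generators_pairwise_disjoint_zmultiples (A := A)
  exact f.exists_eq_zsmul_of_generators hf g hgen hdisj fun _ _ =>
    addOrderOf_dvd_addOrderOf_of_le hp hA

theorem exists_gcd_eq_one_zsmul_eq_of_injective {p : ℕ} (hp : p.Prime)
    (hA : ∀ a : A, ∃ k : ℕ, p ^ k • a = 0) {m : ℤ} (hm : Function.Injective fun a : A => m • a) :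
    ∃ m' : ℤ, Int.gcd m' p = 1 ∧ ∀ a : A, m' • a = m • a := by
  by_cases hpm : (p : ℤ) ∣ m
  · have htriv (k : ℕ) (a : A) (ha : p ^ k • a = 0) : a = 0 := by
      induction k generalizing a with
      | zero => simpa using ha
      | succ k ih =>
        have hpa : p • a = 0 := ih _ (by rw [smul_smul, ← pow_succ, ha])
        obtain ⟨m', rfl⟩ := hpm
        exact hm (show (p * m') • a = (p * m') • 0 by
          rw [mul_comm, mul_smul, natCast_zsmul, hpa, smul_zero, smul_zero])
    refine ⟨1, Int.gcd_one_left _, fun a => ?_⟩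
    obtain ⟨k, hk⟩ := hA a
    rw [htriv k a hk, smul_zero, smul_zero]
  · exact ⟨m, Int.isCoprime_iff_gcd_eq_one.1
      ((Nat.prime_iff_prime_int.1 hp).irreducible.coprime_iff_not_dvd.2 hpm).symm, fun _ => rfl⟩

end

namespace IsDuality

variable {A : Type*} [AddCommGroup A] {φ : A → AddChar A ℂˣ}

noncomputable def addEquiv (hφ : IsDuality φ) : A ≃+ AddChar A ℂˣ :=
  AddEquiv.ofBijective (AddMonoidHom.mk' φ hφ.2) hφ.1

@[simp] theorem addEquiv_apply (hφ : IsDuality φ) (a : A) : hφ.addEquiv a = φ a := rfl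

theorem map_zsmul_apply (hφ : IsDuality φ) (n : ℤ) (a b : A) : φ (n • a) b = φ a b ^ n := by
  rw [← hφ.addEquiv_apply, map_zsmul, AddChar.zsmul_apply, hφ.addEquiv_apply]

theorem mem_rDual_zmultiples (hφ : IsDuality φ) {a x : A} :
    x ∈ rDual φ (zmultiples a) ↔ φ a x = 1 :=
  ⟨fun h => h a (mem_zmultiples a), by rintro h _ ⟨n, rfl⟩; rw [hφ.map_zsmul_apply, h, one_zpow]⟩

theorem mem_zmultiples_of_forall_eq_one_imp [Finite A] (hφ : IsDuality φ) {a b : A}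
    (h : ∀ x, φ a x = 1 → φ b x = 1) : b ∈ zmultiples a := by
  obtain ⟨n, hn⟩ := AddChar.exists_apply_eq_pow_of_forall_eq_one_imp h
  refine mem_zmultiples_iff.2 ⟨n, hφ.1.1 (DFunLike.ext _ _ fun x => ?_)⟩
  rw [hφ.map_zsmul_apply, zpow_natCast, hn]

theorem map_zsmul_apply_eq_one_iff (hφ : IsDuality φ) {p k : ℕ} {m : ℤ} (hm : Int.gcd m p = 1)
    {x : A} (hx : p ^ k • x = 0) (y : A) : φ (m • x) y = 1 ↔ φ x y = 1 := by
  have hpk : φ x y ^ ((p : ℤ) ^ k) = 1 := by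
    rw [← hφ.map_zsmul_apply, ← Nat.cast_pow, natCast_zsmul, hx, ← hφ.addEquiv_apply, map_zero,
      AddChar.zero_apply]
  rw [hφ.map_zsmul_apply]
  exact ⟨fun h => eq_one_of_zpow_eq_one_of_isCoprime
    (Int.isCoprime_iff_gcd_eq_one.2 hm).pow_right h hpk, fun h => by rw [h, one_zpow]⟩

end IsDuality

/-- Two dualities of a finite abelian `p`-group give the same left and right duals for
every subgroup iff they differ by multiplication by an integer coprime to `p`. -/
theorem same_duals_iff_smul_coprime {p : ℕ} (hp : p.Prime) {A : Type*} [AddCommGroup A]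
    [Fintype A] (hA : ∀ a : A, ∃ k : ℕ, p ^ k • a = 0)
    (φ₁ φ₂ : A → AddChar A ℂˣ) (hφ₁ : IsDuality φ₁) (hφ₂ : IsDuality φ₂) :
    (∀ H : AddSubgroup A,
        lDual φ₂ (H : Set A) = lDual φ₁ (H : Set A) ∧
        rDual φ₂ (H : Set A) = rDual φ₁ (H : Set A)) ↔
      ∃ m : ℤ, Int.gcd m p = 1 ∧ ∀ a : A, φ₂ a = φ₁ (m • a) := by
  constructor
  · intro hdual
    set ψ := hφ₂.addEquiv.trans hφ₁.addEquiv.symm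
    have hψ (a : A) : φ₁ (ψ a) = φ₂ a := hφ₁.addEquiv.apply_symm_apply _
    have hψ_mem (a : A) : ψ a ∈ zmultiples a :=
      hφ₁.mem_zmultiples_of_forall_eq_one_imp fun x hx => by
        rwa [hψ, ← hφ₂.mem_rDual_zmultiples, (hdual _).2, hφ₁.mem_rDual_zmultiples]
    obtain ⟨m, hm⟩ := ψ.toAddMonoidHom.exists_eq_zsmul_of_forall_mem_zmultiples hp hA hψ_mem
    obtain ⟨m', hm', hm'm⟩ := exists_gcd_eq_one_zsmul_eq_of_injective hp hA (m := m)
      (by convert ψ.injective using 1; exact funext fun a => (hm a).symm)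
    exact ⟨m', hm', fun a => by rw [hm'm, ← hm, AddEquiv.coe_toAddMonoidHom, hψ]⟩
  · rintro ⟨m, hm, hφ⟩ H
    have hpairing (x y : A) : φ₂ x y = 1 ↔ φ₁ x y = 1 := by
      obtain ⟨k, hk⟩ := hA x
      rw [hφ, hφ₁.map_zsmul_apply_eq_one_iff hm hk]
    simp only [lDual, rDual, hpairing, and_self]
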